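/- Let π : Q → Q/G be a principal G-bundle, 𝒜_d an affine discrete connection on π defined on all of Q × Q, with horizontal lift h_d and h̄_d^{q}(τ) := pr₂(h_d(q,τ)). Define Φ̃ : Q × Q → Q × G × (Q/G) by Φ̃(q₀,q₁) := (q₀, 𝒜_d(q₀,q₁), π(q₁)) and Ψ̃ : Q × G × (Q/G) → Q × Q by Ψ̃(q₀,w₀,τ₁) := (q₀, l^Q_{w₀}(h̄_d^{q₀}(τ₁))). Then Φ̃ and Ψ̃ are mutually inverse bijections, and both are G-equivariant for the diagonal action on Q × Q and the action g·(q₀,w₀,τ₁) := (l^Q_g(q₀), g w₀ g⁻¹, τ₁) on Q × G × (Q/G). -/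
import Mathlib

/-- The canonical projection `π : Q → Q/G` onto the orbit space of a group action. -/
def orbitProj (G : Type*) {Q : Type*} [Group G] [MulAction G Q] (q : Q) :
    Quotient (MulAction.orbitRel G Q) :=
  Quotient.mk (MulAction.orbitRel G Q) q

lemma orbitProj_smul {G Q : Type*} [Group G] [MulAction G Q] (g : G) (q : Q) :
    orbitProj G (g • q) = orbitProj G q :=
  Quotient.sound ⟨g, rfl⟩

/-- for an affine discrete connection `𝒜_d` defined on all of
`Q × Q` with horizontal lift `h̄_d`, the maps
`Φ̃(q₀,q₁) := (q₀, 𝒜_d(q₀,q₁), π(q₁))` and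
`Ψ̃(q₀,w₀,τ₁) := (q₀, w₀ • h̄_d^{q₀}(τ₁))` are mutually inverse bijections, and
both are `G`-equivariant for the diagonal action on `Q × Q` and the action
`g • (q₀,w₀,τ₁) = (g•q₀, g w₀ g⁻¹, τ₁)` on `Q × G × (Q/G)`. -/
theorem affine_connection_product_identification
    {G Q : Type*} [Group G] [MulAction G Q]
    (hfree : ∀ (g : G) (q : Q), g • q = q → g = 1)
    (A : Q × Q → G)
    (hAeq : ∀ (p : Q × Q) (g0 g1 : G), A (g0 • p.1, g1 • p.2) = g1 * A p * g0⁻¹)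
    (hbar : Q → Quotient (MulAction.orbitRel G Q) → Q)
    (hπh : ∀ (q : Q) (τ : Quotient (MulAction.orbitRel G Q)), orbitProj G (hbar q τ) = τ)
    (hrec : ∀ q0 q1 : Q, A (q0, q1) • hbar q0 (orbitProj G q1) = q1) :
    -- `Φ̃` and `Ψ̃` are mutually inverse
    (∀ p : Q × Q,
        (p.1, A p • hbar p.1 (orbitProj G p.2)) = p)
      ∧ (∀ (q0 : Q) (w : G) (τ : Quotient (MulAction.orbitRel G Q)),
          ((q0 : Q), A (q0, w • hbar q0 τ), orbitProj G (w • hbar q0 τ))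
            = (q0, w, τ))
      -- `Φ̃` is `G`-equivariant
      ∧ (∀ (g : G) (p : Q × Q),
          ((g • p.1 : Q), A (g • p.1, g • p.2), orbitProj G (g • p.2))
            = (g • p.1, g * A p * g⁻¹, orbitProj G p.2))
      -- `Ψ̃` is `G`-equivariant
      ∧ (∀ (g : G) (q0 : Q) (w : G) (τ : Quotient (MulAction.orbitRel G Q)),
          ((g • q0 : Q), (g * w * g⁻¹) • hbar (g • q0) τ)
            = (g • q0, g • (w • hbar q0 τ))) := by
  have hA1 : ∀ (q0 : Q) (τ : Quotient (MulAction.orbitRel G Q)),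
      A (q0, hbar q0 τ) = 1 := by
    intro q0 τ
    have h := hrec q0 (hbar q0 τ)
    rw [hπh] at h
    exact hfree _ _ h
  have hbar_smul : ∀ (g : G) (q0 : Q) (τ : Quotient (MulAction.orbitRel G Q)),
      hbar (g • q0) τ = g • hbar q0 τ := by
    intro g q0 τ
    have h := hrec (g • q0) (hbar q0 τ)
    rw [hπh] at h
    have hA : A (g • q0, hbar q0 τ) = g⁻¹ := by
      have := hAeq (q0, hbar q0 τ) g 1
      simp [hA1] at this
      simpa using this
    rw [hA] at h
    rw [← h, smul_smul]
    simp
  refine ⟨fun p => by rw [hrec], fun q0 w τ => ?_, fun g p => ?_, fun g q0 w τ => ?_⟩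
  · have hA : A (q0, w • hbar q0 τ) = w := by
      have := hAeq (q0, hbar q0 τ) 1 w
      simp [hA1] at this
      simpa using this
    rw [hA, orbitProj_smul, hπh]
  · rw [hAeq, orbitProj_smul]
  · rw [hbar_smul, smul_smul, smul_smul]
    simp [mul_assoc]
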